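/- Assume the pre-semi-frame conditions (SF3): φ₁[N₁·N₃] = M₁·N₂, φ₂[M₁·N₂] = M₃·M₂, and φ₃[N₁·N₃] = M₃·M₂; let C ⊆ G₁ be a left coset of N₁·N₃ satisfying the semi-frame condition (SF4): for every Q ⊆ G₁ that is a union of left cosets of N₁·N₃, φ₂[φ₁[Q]] = φ₃[C⁻¹·Q·C]. Let C″ ⊆ G₃ be a left coset of M₂·M₃, and define, for u ∈ G₃⧸M₂ and v ∈ G₂⧸M₁, the reversed product R̃²_u ⊗_{C″} R̃¹_v := ⋃{R̃³_w : w ∈ G₃⧸M₃, ⟨w⟩ ⊆ φ₂[⟨φ₂⁻¹(u)⟩·⟨v⟩]·C″}. Then the following are equivalent: (i) (R¹_a ⊗_C R²_b)˘ = R̃²_{φ₂(b⁻¹)} ⊗_{C″} R̃¹_{φ₁(a⁻¹)} for some a ∈ G₁⧸N₁ and b ∈ G₂⧸N₂ (note that R̃²_{φ₂(b⁻¹)} and R̃¹_{φ₁(a⁻¹)} are exactly the relational converses of R²_b and R¹_a); (ii) the same equation holds for all a ∈ G₁⧸N₁ and b ∈ G₂⧸N₂; (iii) φ₃[C] = (C″)⁻¹.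 (Second Involution Law Theorem.) -/

import Mathlib

/-!
Put `P = N₁N₃` and `R = M₃M₂`. Every set in sight is a coset of a normal subgroup, and such
cosets multiply and invert like elements of the quotient group. Write `T = ⟨φ₁ a⟩⟨b⟩` and
`X = φ₁⁻¹[T]`, a `P`-coset. The converse of `⋃ R³_c` over `⟨c⟩ ⊆ X·C` is `⋃ R̃³_w` over
`⟨w⟩ ⊆ φ₃[(X·C)⁻¹]`, and such unions determine their (saturated) index sets, so the equation for
`a, b` says `φ₃[C⁻¹X⁻¹] = φ₂[T⁻¹]·C''`. By (SF4), `φ₂[T⁻¹] = φ₂[φ₁[X]]⁻¹ = φ₃[C⁻¹X⁻¹C]`, so the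
equation reads `Y = Y·φ₃[C]·C''` for the `R`-coset `Y = φ₃[C⁻¹X⁻¹]`, and cancelling `Y` leaves
`φ₃[C] = C''⁻¹`, whatever `a` and `b` are.
-/

open scoped Pointwise

namespace CosetRA

variable {G G' : Type*}

/-- The coset of `a : G ⧸ N` as a subset of `G`: `⟨a⟩ = {g : G | [g]_N = a}`. -/
def cosetOf [Group G] (N : Subgroup G) (a : G ⧸ N) : Set G :=
  {g : G | (g : G ⧸ N) = a}

/-- Forward image `φ[S]` of a subset `S ⊆ G` under a quotient isomorphism. -/
def fwd [Group G] [Group G'] (N : Subgroup G) (M : Subgroup G')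
    [N.Normal] [M.Normal] (φ : G ⧸ N ≃* G' ⧸ M) (S : Set G) : Set G' :=
  {h : G' | ∃ g ∈ S, φ (g : G ⧸ N) = (h : G' ⧸ M)}

/-- Inverse image `φ⁻¹[S']` of a subset `S' ⊆ G'` under a quotient isomorphism. -/
def bwd [Group G] [Group G'] (N : Subgroup G) (M : Subgroup G')
    [N.Normal] [M.Normal] (φ : G ⧸ N ≃* G' ⧸ M) (S' : Set G') : Set G :=
  {g : G | ∃ h ∈ S', φ (g : G ⧸ N) = (h : G' ⧸ M)}

/-- The atomic relation `R_a = {(g,h) : [h]_M = φ([g]_N)·φ(a)}`. -/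
def atom [Group G] [Group G'] (N : Subgroup G) (M : Subgroup G')
    [N.Normal] [M.Normal] (φ : G ⧸ N ≃* G' ⧸ M) (a : G ⧸ N) : Set (G × G') :=
  {p : G × G' | (p.2 : G' ⧸ M) = φ (p.1 : G ⧸ N) * φ a}

/-- Converse of a relation: `R˘ = {(v,u) : (u,v) ∈ R}`. -/
def conv {α β : Type*} (R : Set (α × β)) : Set (β × α) := {p | (p.2, p.1) ∈ R}

/-- Relational composition `R ∘ S`. -/
def rcomp {α β γ : Type*} (R : Set (α × β)) (S : Set (β × γ)) : Set (α × γ) :=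
  {p | ∃ v, (p.1, v) ∈ R ∧ (v, p.2) ∈ S}

/-- `C` is a left coset of the set `P`. -/
def IsLeftCosetSet [Group G] (P C : Set G) : Prop := ∃ g : G, C = g • P

/-- `Q` is a union of left cosets of the set `P`. -/
def IsUnionOfCosets [Group G] (P Q : Set G) : Prop := ∀ g ∈ Q, g • P ⊆ Q

/-- The union of all atomic relations `R_c` with `⟨c⟩ ⊆ K`. -/
def unionAtoms [Group G] [Group G'] (N : Subgroup G) (M : Subgroup G')
    [N.Normal] [M.Normal] (φ : G ⧸ N ≃* G' ⧸ M) (K : Set G) : Set (G × G') :=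
  ⋃ c ∈ {c : G ⧸ N | cosetOf N c ⊆ K}, atom N M φ c

section Cosets

variable [Group G]

lemma cosetOf_mk (N : Subgroup G) (g : G) : cosetOf N (g : G ⧸ N) = g • (N : Set G) := by
  ext x
  simp [cosetOf, mem_leftCoset_iff, QuotientGroup.eq, eq_comm]

lemma cosetOf_mul (N : Subgroup G) [N.Normal] (c d : G ⧸ N) :
    cosetOf N c * cosetOf N d = cosetOf N (c * d) := by
  ext x
  constructor
  · rintro ⟨y, rfl, z, rfl, rfl⟩
    rfl
  · intro hx
    obtain ⟨y, rfl⟩ := QuotientGroup.mk_surjective c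
    refine ⟨y, rfl, y⁻¹ * x, ?_, mul_inv_cancel_left y x⟩
    change ((y⁻¹ * x : G) : G ⧸ N) = d
    rw [QuotientGroup.mk_mul, QuotientGroup.mk_inv, hx, inv_mul_cancel_left]

lemma cosetOf_inv (N : Subgroup G) [N.Normal] (c : G ⧸ N) :
    (cosetOf N c)⁻¹ = cosetOf N c⁻¹ := by
  ext x
  simp [cosetOf, inv_eq_iff_eq_inv]

lemma cosetOf_injective (N : Subgroup G) : Function.Injective (cosetOf N) := by
  intro c d h
  obtain ⟨x, rfl⟩ := QuotientGroup.mk_surjective c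
  exact (h ▸ rfl : x ∈ cosetOf N d)

lemma isLeftCosetSet_iff (N : Subgroup G) (S : Set G) :
    IsLeftCosetSet (N : Set G) S ↔ ∃ c : G ⧸ N, S = cosetOf N c := by
  constructor
  · rintro ⟨g, rfl⟩
    exact ⟨g, (cosetOf_mk N g).symm⟩
  · rintro ⟨c, rfl⟩
    obtain ⟨g, rfl⟩ := QuotientGroup.mk_surjective c
    exact ⟨g, cosetOf_mk N g⟩

lemma smul_coe_mul_smul_coe (A B : Subgroup G) [hA : A.Normal] (g k : G) :
    g • (A : Set G) * k • (B : Set G) = (g * k) • ((A ⊔ B : Subgroup G) : Set G) := by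
  rw [Subgroup.normal_mul]
  ext x
  simp only [Set.mem_smul_set, Set.mem_mul, SetLike.mem_coe, smul_eq_mul]
  constructor
  · rintro ⟨-, ⟨a, ha, rfl⟩, -, ⟨b, hb, rfl⟩, rfl⟩
    exact ⟨k⁻¹ * a * k * b, ⟨k⁻¹ * a * k, hA.conj_mem' a ha k, b, hb, rfl⟩,
      by group⟩
  · rintro ⟨-, ⟨a, ha, b, hb, rfl⟩, rfl⟩
    exact ⟨g * (k * a * k⁻¹), ⟨_, hA.conj_mem a ha k, rfl⟩, k * b,
      ⟨b, hb, rfl⟩, by group⟩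

lemma isLeftCosetSet_cosetOf (N : Subgroup G) (c : G ⧸ N) :
    IsLeftCosetSet (N : Set G) (cosetOf N c) :=
  (isLeftCosetSet_iff N _).2 ⟨c, rfl⟩

namespace IsLeftCosetSet

lemma mul {A B : Subgroup G} [A.Normal] {S T : Set G} (hS : IsLeftCosetSet (A : Set G) S)
    (hT : IsLeftCosetSet (B : Set G) T) :
    IsLeftCosetSet ((A ⊔ B : Subgroup G) : Set G) (S * T) := by
  obtain ⟨g, rfl⟩ := hS
  obtain ⟨k, rfl⟩ := hT
  exact ⟨g * k, smul_coe_mul_smul_coe A B g k⟩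

lemma mul_of_same {N : Subgroup G} [N.Normal] {S T : Set G}
    (hS : IsLeftCosetSet (N : Set G) S) (hT : IsLeftCosetSet (N : Set G) T) :
    IsLeftCosetSet (N : Set G) (S * T) := by
  simpa only [sup_idem] using hS.mul hT

lemma inv {N : Subgroup G} [N.Normal] {S : Set G} (hS : IsLeftCosetSet (N : Set G) S) :
    IsLeftCosetSet (N : Set G) S⁻¹ := by
  obtain ⟨c, rfl⟩ := (isLeftCosetSet_iff N S).1 hS
  exact (isLeftCosetSet_iff N _).2 ⟨c⁻¹, cosetOf_inv N c⟩

lemma eq_mul_mul_iff {N : Subgroup G} [N.Normal] {X Y Z : Set G}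
    (hX : IsLeftCosetSet (N : Set G) X) (hY : IsLeftCosetSet (N : Set G) Y)
    (hZ : IsLeftCosetSet (N : Set G) Z) : X = X * Y * Z ↔ Y = Z⁻¹ := by
  obtain ⟨x, rfl⟩ := (isLeftCosetSet_iff N X).1 hX
  obtain ⟨y, rfl⟩ := (isLeftCosetSet_iff N Y).1 hY
  obtain ⟨z, rfl⟩ := (isLeftCosetSet_iff N Z).1 hZ
  rw [cosetOf_mul, cosetOf_mul, cosetOf_inv, (cosetOf_injective N).eq_iff,
    (cosetOf_injective N).eq_iff, mul_assoc, left_eq_mul, mul_eq_one_iff_eq_inv]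

lemma isUnionOfCosets {N P : Subgroup G} (hNP : N ≤ P) {S : Set G}
    (hS : IsLeftCosetSet (P : Set G) S) : IsUnionOfCosets (N : Set G) S := by
  obtain ⟨g, rfl⟩ := hS
  rintro _ ⟨p, hp, rfl⟩ _ ⟨n, hn, rfl⟩
  exact ⟨p * n, P.mul_mem hp (hNP hn), (smul_mul_assoc g p n).symm⟩

end IsLeftCosetSet

namespace IsUnionOfCosets

variable {N : Subgroup G} {K : Set G}

lemma mem_of_mk_eq (hK : IsUnionOfCosets (N : Set G) K) {x y : G} (hx : x ∈ K)
    (hxy : (x : G ⧸ N) = y) : y ∈ K :=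
  hK x hx ⟨x⁻¹ * y, QuotientGroup.eq.1 hxy, mul_inv_cancel_left x y⟩

lemma cosetOf_mk_subset_iff (hK : IsUnionOfCosets (N : Set G) K) (x : G) :
    cosetOf N (x : G ⧸ N) ⊆ K ↔ x ∈ K :=
  ⟨fun h ↦ h rfl, fun hx _ hy ↦ hK.mem_of_mk_eq hx hy.symm⟩

lemma mul_left (hK : IsUnionOfCosets (N : Set G) K) (X : Set G) :
    IsUnionOfCosets (N : Set G) (X * K) := by
  rintro _ ⟨x, hx, k, hk, rfl⟩ _ ⟨n, hn, rfl⟩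
  exact ⟨x, hx, k * n, hK k hk ⟨n, hn, rfl⟩, (mul_assoc x k n).symm⟩

lemma inv [N.Normal] (hK : IsUnionOfCosets (N : Set G) K) : IsUnionOfCosets (N : Set G) K⁻¹ := by
  rintro x hx _ ⟨n, hn, rfl⟩
  refine hK.mem_of_mk_eq hx ?_
  change ((x⁻¹ : G) : G ⧸ N) = ((x * n)⁻¹ : G)
  rw [mul_inv_rev, QuotientGroup.mk_mul _ n⁻¹, (QuotientGroup.eq_one_iff _).2 (N.inv_mem hn),
    one_mul]

end IsUnionOfCosets

end Cosets

section QuotientIso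

variable [Group G] [Group G'] {N : Subgroup G} {M : Subgroup G'} [N.Normal] [M.Normal]
  (φ : G ⧸ N ≃* G' ⧸ M)

lemma bwd_eq_fwd_symm (S' : Set G') : bwd N M φ S' = fwd M N φ.symm S' := by
  ext g
  simp only [bwd, fwd, Set.mem_ofPred_eq, MulEquiv.eq_symm_apply, eq_comm]

lemma isUnionOfCosets_fwd (S : Set G) : IsUnionOfCosets (M : Set G') (fwd N M φ S) := by
  rintro h ⟨g, hg, hgh⟩ _ ⟨m, hm, rfl⟩
  exact ⟨g, hg, hgh.trans (QuotientGroup.eq.2 (by simpa using hm))⟩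

lemma mem_fwd_iff {S : Set G} (hS : IsUnionOfCosets (N : Set G) S) {x : G} {y : G'}
    (hxy : φ x = y) : y ∈ fwd N M φ S ↔ x ∈ S :=
  ⟨fun ⟨_, hg, hgy⟩ ↦ hS.mem_of_mk_eq hg (φ.injective (hgy.trans hxy.symm)),
    fun hx ↦ ⟨x, hx, hxy⟩⟩

lemma fwd_symm_fwd {S : Set G} (hS : IsUnionOfCosets (N : Set G) S) :
    fwd M N φ.symm (fwd N M φ S) = S := by
  ext x
  obtain ⟨y, hy⟩ := QuotientGroup.mk_surjective (φ x)
  rw [mem_fwd_iff φ.symm (isUnionOfCosets_fwd φ S) (φ.symm_apply_eq.2 hy),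
    mem_fwd_iff φ hS hy.symm]

lemma fwd_mul (S T : Set G) : fwd N M φ (S * T) = fwd N M φ S * fwd N M φ T := by
  ext h
  constructor
  · rintro ⟨-, ⟨s, hs, t, ht, rfl⟩, hst⟩
    obtain ⟨k, hk⟩ := QuotientGroup.mk_surjective (φ s)
    refine ⟨k, ⟨s, hs, hk.symm⟩, k⁻¹ * h, ⟨t, ht, ?_⟩, mul_inv_cancel_left k h⟩
    rw [QuotientGroup.mk_mul, QuotientGroup.mk_inv, ← hst, hk, QuotientGroup.mk_mul, map_mul,
      ← hk, inv_mul_cancel_left]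
  · rintro ⟨k, ⟨s, hs, hsk⟩, l, ⟨t, ht, htl⟩, rfl⟩
    exact ⟨s * t, ⟨s, hs, t, ht, rfl⟩, by rw [QuotientGroup.mk_mul, map_mul, hsk, htl]; rfl⟩

lemma fwd_inv (S : Set G) : fwd N M φ S⁻¹ = (fwd N M φ S)⁻¹ := by
  ext h
  constructor
  · rintro ⟨g, hg, hgh⟩
    exact ⟨g⁻¹, hg, by rw [QuotientGroup.mk_inv, map_inv, hgh, QuotientGroup.mk_inv]⟩
  · rintro ⟨g, hg, hgh⟩
    exact ⟨g⁻¹, by rwa [Set.mem_inv, inv_inv], by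
      rw [QuotientGroup.mk_inv, map_inv, hgh, QuotientGroup.mk_inv, inv_inv]⟩

lemma fwd_smul {g : G} {k : G'} (hgk : φ g = k) (S : Set G) :
    fwd N M φ (g • S) = k • fwd N M φ S := by
  ext h
  constructor
  · rintro ⟨-, ⟨s, hs, rfl⟩, hsh⟩
    refine ⟨k⁻¹ * h, ⟨s, hs, ?_⟩, mul_inv_cancel_left k h⟩
    rw [QuotientGroup.mk_mul, QuotientGroup.mk_inv, ← hsh]
    simp only [smul_eq_mul, QuotientGroup.mk_mul, map_mul, hgk, inv_mul_cancel_left]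
  · rintro ⟨l, ⟨s, hs, hsl⟩, rfl⟩
    exact ⟨g * s, ⟨s, hs, rfl⟩, by rw [QuotientGroup.mk_mul, map_mul, hgk, hsl]; rfl⟩

lemma IsLeftCosetSet.fwd {P : Subgroup G} {R : Subgroup G'}
    (hPR : fwd N M φ (P : Set G) = R) {S : Set G} (hS : IsLeftCosetSet (P : Set G) S) :
    IsLeftCosetSet (R : Set G') (fwd N M φ S) := by
  obtain ⟨g, rfl⟩ := hS
  obtain ⟨k, hk⟩ := QuotientGroup.mk_surjective (φ g)
  exact ⟨k, by rw [fwd_smul φ hk.symm, hPR]⟩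

end QuotientIso

section Atoms

variable [Group G] [Group G'] {N : Subgroup G} {M : Subgroup G'} [N.Normal] [M.Normal]
  (φ : G ⧸ N ≃* G' ⧸ M)

lemma mem_unionAtoms {K : Set G} {g : G} {h : G'} :
    (g, h) ∈ unionAtoms N M φ K ↔ cosetOf N ((g : G ⧸ N)⁻¹ * φ.symm h) ⊆ K := by
  simp only [unionAtoms, atom, Set.mem_iUnion, Set.mem_ofPred_eq, exists_prop]
  constructor
  · rintro ⟨c, hc, hgh⟩
    rwa [hgh, map_mul, φ.symm_apply_apply, φ.symm_apply_apply, inv_mul_cancel_left]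
  · exact fun hK ↦ ⟨_, hK, by rw [map_mul, map_inv, φ.apply_symm_apply, mul_inv_cancel_left]⟩

lemma conv_unionAtoms {K : Set G} (hK : IsUnionOfCosets (N : Set G) K) :
    conv (unionAtoms N M φ K) = unionAtoms M N φ.symm (fwd N M φ K⁻¹) := by
  ext ⟨h, g⟩
  obtain ⟨x, hx⟩ := QuotientGroup.mk_surjective ((g : G ⧸ N)⁻¹ * φ.symm h)
  obtain ⟨y, hy⟩ := QuotientGroup.mk_surjective ((h : G' ⧸ M)⁻¹ * φ g)
  have hxy : φ (x⁻¹ : G) = y := by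
    rw [QuotientGroup.mk_inv, map_inv, hx, hy, map_mul, map_inv, φ.apply_symm_apply, mul_inv_rev,
      inv_inv]
  change (g, h) ∈ unionAtoms N M φ K ↔ _
  rw [mem_unionAtoms, mem_unionAtoms, φ.symm_symm, ← hx, ← hy, hK.cosetOf_mk_subset_iff,
    (isUnionOfCosets_fwd φ _).cosetOf_mk_subset_iff, mem_fwd_iff φ hK.inv hxy, Set.inv_mem_inv]

lemma unionAtoms_inj {K₁ K₂ : Set G} (hK₁ : IsUnionOfCosets (N : Set G) K₁)
    (hK₂ : IsUnionOfCosets (N : Set G) K₂) :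
    unionAtoms N M φ K₁ = unionAtoms N M φ K₂ ↔ K₁ = K₂ := by
  refine ⟨fun h ↦ Set.ext fun x ↦ ?_, congrArg _⟩
  obtain ⟨y, hy⟩ := QuotientGroup.mk_surjective (φ x)
  have hxy : ((1 : G) : G ⧸ N)⁻¹ * φ.symm y = x := by
    rw [hy, φ.symm_apply_apply, QuotientGroup.mk_one, inv_one, one_mul]
  have h1y := Set.ext_iff.1 h (1, y)
  rwa [mem_unionAtoms, mem_unionAtoms, hxy, hK₁.cosetOf_mk_subset_iff,
    hK₂.cosetOf_mk_subset_iff] at h1y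

lemma conv_unionAtoms_eq_unionAtoms_symm_iff {K : Set G} {K' : Set G'}
    (hK : IsUnionOfCosets (N : Set G) K) (hK' : IsUnionOfCosets (M : Set G') K') :
    conv (unionAtoms N M φ K) = unionAtoms M N φ.symm K' ↔ fwd N M φ K⁻¹ = K' := by
  rw [conv_unionAtoms φ hK, unionAtoms_inj φ.symm (isUnionOfCosets_fwd φ _) hK']

end Atoms

theorem involution_law_iff {G₁ G₂ G₃ : Type*} [Group G₁] [Group G₂] [Group G₃]
    {N₁ N₃ P : Subgroup G₁} {M₁ N₂ : Subgroup G₂} {M₂ M₃ R : Subgroup G₃}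
    [N₁.Normal] [M₁.Normal] [N₂.Normal] [M₂.Normal] [N₃.Normal] [M₃.Normal] [P.Normal] [R.Normal]
    {φ₁ : G₁ ⧸ N₁ ≃* G₂ ⧸ M₁} {φ₂ : G₂ ⧸ N₂ ≃* G₃ ⧸ M₂} {φ₃ : G₁ ⧸ N₃ ≃* G₃ ⧸ M₃}
    (hN₁P : N₁ ≤ P) (hN₃P : N₃ ≤ P) (hM₃R : M₃ ≤ R)
    (hφ₁P : fwd N₁ M₁ φ₁ (P : Set G₁) = ((M₁ ⊔ N₂ : Subgroup G₂) : Set G₂))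
    (hφ₃P : fwd N₃ M₃ φ₃ (P : Set G₁) = R)
    {C : Set G₁} (hC : IsLeftCosetSet (P : Set G₁) C)
    (hSF4 : ∀ Q : Set G₁, IsUnionOfCosets (P : Set G₁) Q →
      fwd N₂ M₂ φ₂ (fwd N₁ M₁ φ₁ Q) = fwd N₃ M₃ φ₃ (C⁻¹ * Q * C))
    {C'' : Set G₃} (hC'' : IsLeftCosetSet (R : Set G₃) C'') (a : G₁ ⧸ N₁) (b : G₂ ⧸ N₂) :
    conv (unionAtoms N₃ M₃ φ₃ (bwd N₁ M₁ φ₁ (cosetOf M₁ (φ₁ a) * cosetOf N₂ b) * C)) =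
        unionAtoms M₃ N₃ φ₃.symm
          (fwd N₂ M₂ φ₂ (cosetOf N₂ (φ₂.symm (φ₂ b⁻¹)) * cosetOf M₁ (φ₁ a⁻¹)) * C'') ↔
      fwd N₃ M₃ φ₃ C = C''⁻¹ := by
  set T := cosetOf M₁ (φ₁ a) * cosetOf N₂ b
  have hT : IsLeftCosetSet ((M₁ ⊔ N₂ : Subgroup G₂) : Set G₂) T :=
    (isLeftCosetSet_cosetOf M₁ _).mul (isLeftCosetSet_cosetOf N₂ b)
  have hTinv : cosetOf N₂ (φ₂.symm (φ₂ b⁻¹)) * cosetOf M₁ (φ₁ a⁻¹) = T⁻¹ := by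
    rw [φ₂.symm_apply_apply, map_inv, ← cosetOf_inv, ← cosetOf_inv, mul_inv_rev]
  rw [bwd_eq_fwd_symm]
  set Q := fwd M₁ N₁ φ₁.symm T
  have hφ₁Q : fwd N₁ M₁ φ₁ Q = T := by
    simpa only [φ₁.symm_symm] using fwd_symm_fwd φ₁.symm (hT.isUnionOfCosets le_sup_left)
  have hQ : IsLeftCosetSet (P : Set G₁) Q := by
    have hP : IsLeftCosetSet (P : Set G₁) P := ⟨1, (one_smul G₁ _).symm⟩
    exact hT.fwd φ₁.symm (by rw [← hφ₁P, fwd_symm_fwd φ₁ (hP.isUnionOfCosets hN₁P)])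
  have hφ₂T : fwd N₂ M₂ φ₂ T⁻¹ = fwd N₃ M₃ φ₃ (C⁻¹ * Q⁻¹ * C) := by
    rw [fwd_inv, ← hφ₁Q, hSF4 Q (hQ.isUnionOfCosets le_rfl), ← fwd_inv]
    simp only [mul_inv_rev, inv_inv, mul_assoc]
  have hY : IsLeftCosetSet (R : Set G₃) (fwd N₃ M₃ φ₃ (C⁻¹ * Q⁻¹)) :=
    (hC.inv.mul_of_same hQ.inv).fwd φ₃ hφ₃P
  rw [hTinv, conv_unionAtoms_eq_unionAtoms_symm_iff φ₃
      ((hC.isUnionOfCosets hN₃P).mul_left Q) ((hC''.isUnionOfCosets hM₃R).mul_left _),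
    hφ₂T, mul_inv_rev, fwd_mul φ₃ (C⁻¹ * Q⁻¹) C]
  exact hY.eq_mul_mul_iff (hC.fwd φ₃ hφ₃P) hC''

theorem second_involution_law_theorem_general {G₁ G₂ G₃ : Type*} [Group G₁] [Group G₂] [Group G₃]
    (N₁ : Subgroup G₁) (M₁ : Subgroup G₂) (N₂ : Subgroup G₂) (M₂ : Subgroup G₃)
    (N₃ : Subgroup G₁) (M₃ : Subgroup G₃)
    [N₁.Normal] [M₁.Normal] [N₂.Normal] [M₂.Normal] [N₃.Normal] [M₃.Normal]
    (φ₁ : G₁ ⧸ N₁ ≃* G₂ ⧸ M₁) (φ₂ : G₂ ⧸ N₂ ≃* G₃ ⧸ M₂) (φ₃ : G₁ ⧸ N₃ ≃* G₃ ⧸ M₃)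
    (hSF3a : fwd N₁ M₁ φ₁ ((N₁ : Set G₁) * (N₃ : Set G₁)) = (M₁ : Set G₂) * (N₂ : Set G₂))
    (hSF3c : fwd N₃ M₃ φ₃ ((N₁ : Set G₁) * (N₃ : Set G₁)) = (M₃ : Set G₃) * (M₂ : Set G₃))
    (C : Set G₁) (hC : IsLeftCosetSet ((N₁ : Set G₁) * (N₃ : Set G₁)) C)
    (hSF4 : ∀ Q : Set G₁, IsUnionOfCosets ((N₁ : Set G₁) * (N₃ : Set G₁)) Q →
      fwd N₂ M₂ φ₂ (fwd N₁ M₁ φ₁ Q) = fwd N₃ M₃ φ₃ (C⁻¹ * Q * C))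
    (C'' : Set G₃) (hC'' : IsLeftCosetSet ((M₂ : Set G₃) * (M₃ : Set G₃)) C'') :
    List.TFAE
      [ (∃ (a : G₁ ⧸ N₁) (b : G₂ ⧸ N₂),
          conv (unionAtoms N₃ M₃ φ₃
              (bwd N₁ M₁ φ₁ (cosetOf M₁ (φ₁ a) * cosetOf N₂ b) * C)) =
            unionAtoms M₃ N₃ φ₃.symm
              (fwd N₂ M₂ φ₂
                (cosetOf N₂ (φ₂.symm (φ₂ b⁻¹)) * cosetOf M₁ (φ₁ a⁻¹)) * C'')),
        (∀ (a : G₁ ⧸ N₁) (b : G₂ ⧸ N₂),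
          conv (unionAtoms N₃ M₃ φ₃
              (bwd N₁ M₁ φ₁ (cosetOf M₁ (φ₁ a) * cosetOf N₂ b) * C)) =
            unionAtoms M₃ N₃ φ₃.symm
              (fwd N₂ M₂ φ₂
                (cosetOf N₂ (φ₂.symm (φ₂ b⁻¹)) * cosetOf M₁ (φ₁ a⁻¹)) * C'')),
        fwd N₃ M₃ φ₃ C = C''⁻¹ ] := by
  rw [← Subgroup.mul_normal N₁ N₃] at hSF3a hSF3c hC hSF4
  rw [← Subgroup.mul_normal M₁ N₂] at hSF3a
  rw [← Subgroup.mul_normal M₃ M₂] at hSF3c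
  rw [← Subgroup.mul_normal M₂ M₃, sup_comm] at hC''
  have key := involution_law_iff le_sup_left le_sup_right le_sup_left hSF3a hSF3c hC hSF4 hC''
  tfae_have 1 → 3 := fun ⟨a, b, h⟩ ↦ (key a b).1 h
  tfae_have 3 → 2 := fun h a b ↦ (key a b).2 h
  tfae_have 2 → 1 := fun h ↦ ⟨1, 1, h 1 1⟩
  tfae_finish

/-- **Second Involution Law Theorem.** -/
theorem second_involution_law_theorem {G₁ G₂ G₃ : Type*} [Group G₁] [Group G₂] [Group G₃]
    (N₁ : Subgroup G₁) (M₁ : Subgroup G₂) (N₂ : Subgroup G₂) (M₂ : Subgroup G₃)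
    (N₃ : Subgroup G₁) (M₃ : Subgroup G₃)
    [N₁.Normal] [M₁.Normal] [N₂.Normal] [M₂.Normal] [N₃.Normal] [M₃.Normal]
    (φ₁ : G₁ ⧸ N₁ ≃* G₂ ⧸ M₁) (φ₂ : G₂ ⧸ N₂ ≃* G₃ ⧸ M₂) (φ₃ : G₁ ⧸ N₃ ≃* G₃ ⧸ M₃)
    (hSF3a : fwd N₁ M₁ φ₁ ((N₁ : Set G₁) * (N₃ : Set G₁)) = (M₁ : Set G₂) * (N₂ : Set G₂))
    (hSF3b : fwd N₂ M₂ φ₂ ((M₁ : Set G₂) * (N₂ : Set G₂)) = (M₃ : Set G₃) * (M₂ : Set G₃))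
    (hSF3c : fwd N₃ M₃ φ₃ ((N₁ : Set G₁) * (N₃ : Set G₁)) = (M₃ : Set G₃) * (M₂ : Set G₃))
    (C : Set G₁) (hC : IsLeftCosetSet ((N₁ : Set G₁) * (N₃ : Set G₁)) C)
    (hSF4 : ∀ Q : Set G₁, IsUnionOfCosets ((N₁ : Set G₁) * (N₃ : Set G₁)) Q →
      fwd N₂ M₂ φ₂ (fwd N₁ M₁ φ₁ Q) = fwd N₃ M₃ φ₃ (C⁻¹ * Q * C))
    (C'' : Set G₃) (hC'' : IsLeftCosetSet ((M₂ : Set G₃) * (M₃ : Set G₃)) C'') :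
    List.TFAE
      [ (∃ (a : G₁ ⧸ N₁) (b : G₂ ⧸ N₂),
          conv (unionAtoms N₃ M₃ φ₃
              (bwd N₁ M₁ φ₁ (cosetOf M₁ (φ₁ a) * cosetOf N₂ b) * C)) =
            unionAtoms M₃ N₃ φ₃.symm
              (fwd N₂ M₂ φ₂
                (cosetOf N₂ (φ₂.symm (φ₂ b⁻¹)) * cosetOf M₁ (φ₁ a⁻¹)) * C'')),
        (∀ (a : G₁ ⧸ N₁) (b : G₂ ⧸ N₂),
          conv (unionAtoms N₃ M₃ φ₃
              (bwd N₁ M₁ φ₁ (cosetOf M₁ (φ₁ a) * cosetOf N₂ b) * C)) =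
            unionAtoms M₃ N₃ φ₃.symm
              (fwd N₂ M₂ φ₂
                (cosetOf N₂ (φ₂.symm (φ₂ b⁻¹)) * cosetOf M₁ (φ₁ a⁻¹)) * C'')),
        fwd N₃ M₃ φ₃ C = C''⁻¹ ] :=
  second_involution_law_theorem_general N₁ M₁ N₂ M₂ N₃ M₃ φ₁ φ₂ φ₃ hSF3a hSF3c C hC hSF4 C'' hC''

end CosetRA
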